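/- Let Q be a finite quiver, d ≥ 1, and Φ : rep(Q) → Mod(R_d) the canonical functor. Then Φ(P(i)) ≅ P((i,1)) and Φ(I(i)) ≅ I((i,d)): Φ sends the indecomposable projective representation at vertex i to the indecomposable projective R_d-module at vertex (i,1), and the indecomposable injective at i to the indecomposable injective at (i,d). In particular Φ preserves projectives and injectives. -/

import Mathlib

open CategoryTheory Quiver

/-- Vertices of the extended quiver `Q_d`: pairs `(i, r)` with `i` a vertex of `Q`
and `r ∈ {1, …, d}`. -/
structure ExtVertex (V : Type) (d : ℕ) where
  v : V
  r : Fin d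

/-- Arrows of the extended quiver `Q_d`: vertical arrows `(i,r) → (i,r+1)` and
horizontal arrows `(i,r) → (j,r)` for each arrow `i → j` of `Q`. -/
inductive ExtArrow (V : Type) [Quiver.{0} V] (d : ℕ) :
    ExtVertex V d → ExtVertex V d → Type
  | vert (i : V) (r : Fin d) (h : r.val + 1 < d) :
      ExtArrow V d ⟨i, r⟩ ⟨i, ⟨r.val + 1, h⟩⟩
  | horiz {i j : V} (a : i ⟶ j) (r : Fin d) : ExtArrow V d ⟨i, r⟩ ⟨j, r⟩

instance (V : Type) [Quiver.{0} V] (d : ℕ) : Quiver (ExtVertex V d) := ⟨ExtArrow V d⟩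

/-- The commutativity relations of the extended quiver: the two paths around each
square are identified. -/
inductive commRel (V : Type) [Quiver.{0} V] (d : ℕ) :
    ∀ (x y : Paths (ExtVertex V d)), (x ⟶ y) → (x ⟶ y) → Prop
  | sq {i j : V} (a : i ⟶ j) (r : Fin d) (h : r.val + 1 < d) :
      commRel V d ⟨i, r⟩ ⟨j, ⟨r.val + 1, h⟩⟩
        (Quiver.Hom.toPath (ExtArrow.horiz a r) ≫
          Quiver.Hom.toPath (ExtArrow.vert j r h))
        (Quiver.Hom.toPath (ExtArrow.vert i r h) ≫
          Quiver.Hom.toPath (ExtArrow.horiz a ⟨r.val + 1, h⟩))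

/-- The category corresponding to the bounded quiver algebra `R_d = KQ_d/I`. -/
def ExtCat (V : Type) [Quiver.{0} V] (d : ℕ) :=
  CategoryTheory.Quotient (fun x y => commRel V d x y)

noncomputable instance (V : Type) [Quiver.{0} V] (d : ℕ) : Category (ExtCat V d) := by
  unfold ExtCat; exact CategoryTheory.Quotient.category _

/-- The image of an arrow of `Q_d` in the path category of `Q`. -/
def projMap {V : Type} [Quiver.{0} V] {d : ℕ} :
    ∀ {x y : ExtVertex V d}, ExtArrow V d x y →
      (((Paths.of V).obj x.v : Paths V) ⟶ (Paths.of V).obj y.v)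
  | _, _, .vert _ _ _ => 𝟙 _
  | _, _, .horiz a _ => Quiver.Hom.toPath a

/-- The projection prefunctor `Q_d ⥤q Paths Q`. -/
def projPre (V : Type) [Quiver.{0} V] (d : ℕ) : ExtVertex V d ⥤q Paths V where
  obj x := (Paths.of V).obj x.v
  map f := projMap f

/-- The projection functor `ExtCat V d ⥤ Paths V`. -/
noncomputable def projFunctor (V : Type) [Quiver.{0} V] (d : ℕ) :
    ExtCat V d ⥤ Paths V :=
  CategoryTheory.Quotient.lift _ (Paths.lift (projPre V d)) (by
    intro x y f g h
    cases h with
    | @sq i j a r hr =>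
      change Quiver.Hom.toPath a ≫ 𝟙 ((Paths.of V).obj j) = 𝟙 ((Paths.of V).obj i) ≫ Quiver.Hom.toPath a
      rfl)

/-- The canonical functor `Φ : rep(Q) ⥤ Mod(R_d)`, given by precomposition with the
projection functor. -/
noncomputable def Phi (k : Type) [Field k] (V : Type) [Quiver.{0} V] (d : ℕ) :
    (Paths V ⥤ ModuleCat.{0} k) ⥤ (ExtCat V d ⥤ ModuleCat.{0} k) :=
  (Functor.whiskeringLeft _ _ _).obj (projFunctor V d)

/-!
STATEMENT 16: `Φ(P(i)) ≅ P((i,1))` and `Φ(I(i)) ≅ I((i,d))`: the canonical functor sends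
the indecomposable projective representation at a vertex `i` (characterized by the
universal property `Hom(P(i), X) ≅ X_i` naturally in `X`) to the indecomposable projective
`R_d`-module at the vertex `(i,1)`, and the indecomposable injective at `i` (characterized
by `Hom(X, I(i)) ≅ (X_i)^*` naturally in `X`) to the indecomposable injective at `(i,d)`.
-/

/-! ### Auxiliary constructions -/

section Aux

variable {V : Type} [Quiver.{0} V] {d : ℕ}

/-- The quotient functor onto `ExtCat`. -/
noncomputable def extQ (V : Type) [Quiver.{0} V] (d : ℕ) :
    Paths (ExtVertex V d) ⥤ ExtCat V d :=
  CategoryTheory.Quotient.functor _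

/-- The row prefunctor at level `r`. -/
noncomputable def rowPre (V : Type) [Quiver.{0} V] (d : ℕ) (r : Fin d) :
    V ⥤q ExtCat V d where
  obj j := (extQ V d).obj ⟨j, r⟩
  map a := (extQ V d).map (Quiver.Hom.toPath (ExtArrow.horiz a r))

/-- The row functor at level `r`. -/
noncomputable def rowF (V : Type) [Quiver.{0} V] (d : ℕ) (r : Fin d) :
    Paths V ⥤ ExtCat V d :=
  Paths.lift (rowPre V d r)

lemma proj_extQ {x y : Paths (ExtVertex V d)} (f : x ⟶ y) :
    (projFunctor V d).map ((extQ V d).map f) = (Paths.lift (projPre V d)).map f := rfl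

lemma proj_horiz {j j' : V} (a : j ⟶ j') (r : Fin d) :
    (projFunctor V d).map ((extQ V d).map (Quiver.Hom.toPath (ExtArrow.horiz a r))) =
      Quiver.Hom.toPath a := by
  erw [proj_extQ, Paths.lift_toPath]
  rfl

lemma proj_vertArrow (j : V) (r : Fin d) (h : r.val + 1 < d) :
    (projFunctor V d).map ((extQ V d).map (Quiver.Hom.toPath (ExtArrow.vert j r h))) =
      𝟙 ((Paths.of V).obj j) := by
  erw [proj_extQ, Paths.lift_toPath]
  rfl

lemma proj_rowF (r : Fin d) {x y : Paths V} (p : x ⟶ y) :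
    (projFunctor V d).map ((rowF V d r).map p) = p := by
  simp only [rowF]
  change @Quiver.Path V _ x y at p
  induction p with
  | nil => rfl
  | cons p e ih =>
    erw [Paths.lift_cons, CategoryTheory.Functor.map_comp, ih]
    simp only [rowPre]
    erw [proj_horiz]
    rfl

/-- The vertical path from `(j,0)` to `(j,n)` in `ExtCat`. -/
noncomputable def vert0 (j : V) : ∀ (n : ℕ) (h : n < d),
    ((extQ V d).obj ⟨j, ⟨0, Nat.lt_of_le_of_lt (Nat.zero_le _) h⟩⟩ ⟶
      (extQ V d).obj ⟨j, ⟨n, h⟩⟩)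
  | 0, _ => 𝟙 _
  | n + 1, h =>
      vert0 j n (by omega) ≫
        (extQ V d).map (Quiver.Hom.toPath (ExtArrow.vert j ⟨n, by omega⟩ h))

lemma proj_vert0 (j : V) (n : ℕ) (h : n < d) :
    (projFunctor V d).map (vert0 j n h) = 𝟙 ((Paths.of V).obj j) := by
  induction n with
  | zero =>
    rw [vert0, CategoryTheory.Functor.map_id]
    rfl
  | succ n ih =>
    rw [vert0, CategoryTheory.Functor.map_comp, ih, proj_vertArrow]
    exact Category.comp_id _

/-- The commutation relation in `ExtCat`. -/
lemma sq_comm {j j' : V} (a : j ⟶ j') (r : Fin d) (h : r.val + 1 < d) :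
    (extQ V d).map (Quiver.Hom.toPath (ExtArrow.horiz a r)) ≫
        (extQ V d).map (Quiver.Hom.toPath (ExtArrow.vert j' r h)) =
      (extQ V d).map (Quiver.Hom.toPath (ExtArrow.vert j r h)) ≫
        (extQ V d).map (Quiver.Hom.toPath (ExtArrow.horiz a ⟨r.val + 1, h⟩)) := by
  erw [← Functor.map_comp, ← Functor.map_comp]
  exact CategoryTheory.Quotient.sound _ (commRel.sq a r h)

lemma horiz_vert0 {j j' : V} (a : j ⟶ j') (n : ℕ) (h : n < d) :
    (extQ V d).map (Quiver.Hom.toPath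
        (ExtArrow.horiz a ⟨0, Nat.lt_of_le_of_lt (Nat.zero_le _) h⟩)) ≫ vert0 j' n h =
      vert0 j n h ≫ (extQ V d).map (Quiver.Hom.toPath (ExtArrow.horiz a ⟨n, h⟩)) := by
  induction n with
  | zero => rw [vert0, vert0, Category.comp_id, Category.id_comp]
  | succ n ih =>
    rw [vert0, vert0, ← Category.assoc, ih (by omega), Category.assoc, Category.assoc,
      sq_comm a ⟨n, by omega⟩ h]

/-- The vertical path from `(j,n)` to `(j,d-1)` in `ExtCat`. -/
noncomputable def vfrom (j : V) (n : ℕ) (h : n < d) :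
    ((extQ V d).obj ⟨j, ⟨n, h⟩⟩ ⟶ (extQ V d).obj ⟨j, ⟨d - 1, by omega⟩⟩) :=
  if h' : n + 1 < d then
    (extQ V d).map (Quiver.Hom.toPath (ExtArrow.vert j ⟨n, h⟩ h')) ≫ vfrom j (n + 1) h'
  else eqToHom (by
    have : n = d - 1 := by omega
    subst this
    rfl)
termination_by d - n

lemma proj_vfrom (j : V) (n : ℕ) (h : n < d) :
    (projFunctor V d).map (vfrom j n h) = 𝟙 ((Paths.of V).obj j) := by
  rw [vfrom]
  split
  · rw [CategoryTheory.Functor.map_comp, proj_vfrom j (n + 1) (by omega), proj_vertArrow]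
    exact Category.id_comp _
  · rw [eqToHom_map]
    exact eqToHom_refl _ _
termination_by d - n

lemma vfrom_succ (j : V) (n : ℕ) (h : n < d) (h' : n + 1 < d) :
    vfrom j n h =
      (extQ V d).map (Quiver.Hom.toPath (ExtArrow.vert j ⟨n, h⟩ h')) ≫ vfrom j (n + 1) h' := by
  rw [vfrom, dif_pos h']

lemma horiz_vfrom {j j' : V} (a : j ⟶ j') (n : ℕ) (h : n < d) :
    (extQ V d).map (Quiver.Hom.toPath (ExtArrow.horiz a ⟨n, h⟩)) ≫ vfrom j' n h =
      vfrom j n h ≫ (extQ V d).map (Quiver.Hom.toPath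
        (ExtArrow.horiz a ⟨d - 1, by omega⟩)) := by
  rw [vfrom, vfrom]
  split
  · next h' =>
    rw [← Category.assoc, sq_comm a ⟨n, h⟩ h', Category.assoc, Category.assoc,
      horiz_vfrom a (n + 1) h']
  · next h' =>
    have : n = d - 1 := by omega
    subst this
    simp
termination_by d - n

end Aux

section Rep

variable {k : Type} [Field k] {V : Type} [Quiver.{0} V] {d : ℕ}

lemma phi_map (X : Paths V ⥤ ModuleCat.{0} k) {c c' : ExtCat V d} (f : c ⟶ c') :
    ((Phi k V d).obj X).map f = X.map ((projFunctor V d).map f) := rfl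

/-- Restriction of a natural transformation `Φ(X) ⟶ T` along the row functor. -/
noncomputable def restrictTo (r : Fin d) {X : Paths V ⥤ ModuleCat.{0} k}
    {T : ExtCat V d ⥤ ModuleCat.{0} k} (ψ : (Phi k V d).obj X ⟶ T) :
    X ⟶ rowF V d r ⋙ T where
  app j := ψ.app ((rowF V d r).obj j)
  naturality j j' p := by
    have := ψ.naturality ((rowF V d r).map p)
    rw [phi_map, proj_rowF] at this
    exact this

/-- Restriction of a natural transformation `T ⟶ Φ(X)` along the row functor. -/
noncomputable def restrictFrom (r : Fin d) {X : Paths V ⥤ ModuleCat.{0} k}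
    {T : ExtCat V d ⥤ ModuleCat.{0} k} (ψ : T ⟶ (Phi k V d).obj X) :
    rowF V d r ⋙ T ⟶ X where
  app j := ψ.app ((rowF V d r).obj j)
  naturality j j' p := by
    have := ψ.naturality ((rowF V d r).map p)
    rw [phi_map, proj_rowF] at this
    exact this

/-- Single-arrow naturality for `phiExtendTo`. -/
lemma extendTo_nat1 (hd : 0 < d) {X : Paths V ⥤ ModuleCat.{0} k}
    {T : ExtCat V d ⥤ ModuleCat.{0} k} (ψ₀ : X ⟶ rowF V d ⟨0, hd⟩ ⋙ T)
    (x y : ExtVertex V d) (e : ExtArrow V d x y) :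
    ((Phi k V d).obj X).map ((extQ V d).map (Quiver.Hom.toPath e)) ≫
        (ψ₀.app y.v ≫ T.map (vert0 y.v y.r.val y.r.isLt)) =
      (ψ₀.app x.v ≫ T.map (vert0 x.v x.r.val x.r.isLt)) ≫
        T.map ((extQ V d).map (Quiver.Hom.toPath e)) := by
  cases e with
  | vert j r h =>
    dsimp only
    have hP : ((Phi k V d).obj X).map ((extQ V d).map
        (Quiver.Hom.toPath (ExtArrow.vert j r h))) = 𝟙 (X.obj j) := by
      rw [show ((Phi k V d).obj X).map ((extQ V d).map
            (Quiver.Hom.toPath (ExtArrow.vert j r h))) =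
          X.map ((projFunctor V d).map ((extQ V d).map
            (Quiver.Hom.toPath (ExtArrow.vert j r h)))) from rfl, proj_vertArrow]
      exact CategoryTheory.Functor.map_id _ _
    rw [hP]
    have : (𝟙 (X.obj j) : X.obj j ⟶ X.obj j) ≫
        (ψ₀.app j ≫ T.map (vert0 j (r.val + 1) h)) = ψ₀.app j ≫ T.map (vert0 j (r.val + 1) h) :=
      Category.id_comp _
    erw [this, Category.assoc, ← CategoryTheory.Functor.map_comp]
    exact congrArg (fun z => ψ₀.app j ≫ T.map z) rfl
  | @horiz j j' a r =>
    dsimp only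
    have hP : ((Phi k V d).obj X).map ((extQ V d).map
        (Quiver.Hom.toPath (ExtArrow.horiz a r))) = X.map (Quiver.Hom.toPath a) := by
      rw [show ((Phi k V d).obj X).map ((extQ V d).map
            (Quiver.Hom.toPath (ExtArrow.horiz a r))) =
          X.map ((projFunctor V d).map ((extQ V d).map
            (Quiver.Hom.toPath (ExtArrow.horiz a r)))) from rfl, proj_horiz]
      rfl
    have hnat := ψ₀.naturality (Quiver.Hom.toPath a)
    rw [show (rowF V d ⟨0, hd⟩ ⋙ T).map (Quiver.Hom.toPath a) =
        T.map ((extQ V d).map (Quiver.Hom.toPath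
          (ExtArrow.horiz a ⟨0, hd⟩))) from congrArg T.map (Paths.lift_toPath _ _)] at hnat
    erw [hP, ← Category.assoc, hnat, Category.assoc, ← CategoryTheory.Functor.map_comp,
      Category.assoc, ← CategoryTheory.Functor.map_comp]
    exact congrArg (fun z => ψ₀.app j ≫ T.map z) (horiz_vert0 a r.val r.isLt)

/-- Naturality for `phiExtendTo`. -/
lemma extendTo_nat (hd : 0 < d) {X : Paths V ⥤ ModuleCat.{0} k}
    {T : ExtCat V d ⥤ ModuleCat.{0} k} (ψ₀ : X ⟶ rowF V d ⟨0, hd⟩ ⋙ T)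
    (x y : ExtVertex V d) (g : Quiver.Path x y) :
    ((Phi k V d).obj X).map ((extQ V d).map g) ≫
        (ψ₀.app y.v ≫ T.map (vert0 y.v y.r.val y.r.isLt)) =
      (ψ₀.app x.v ≫ T.map (vert0 x.v x.r.val x.r.isLt)) ≫
        T.map ((extQ V d).map g) := by
  induction g with
  | nil =>
    have h1 : ((Phi k V d).obj X).map ((extQ V d).map
        (Quiver.Path.nil : Quiver.Path x x)) = 𝟙 _ := CategoryTheory.Functor.map_id _ _
    have h2 : T.map ((extQ V d).map (Quiver.Path.nil : Quiver.Path x x)) = 𝟙 _ :=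
      CategoryTheory.Functor.map_id _ _
    rw [h1, h2, Category.id_comp]
    exact (Category.comp_id _).symm
  | cons p e ih =>
    rw [show (extQ V d).map (p.cons e) =
        (extQ V d).map p ≫ (extQ V d).map (Quiver.Hom.toPath e) from
      (extQ V d).map_comp p (Quiver.Hom.toPath e)]
    rw [CategoryTheory.Functor.map_comp, CategoryTheory.Functor.map_comp,
      Category.assoc]
    erw [extendTo_nat1 hd ψ₀ _ _ e, ← Category.assoc, ih, Category.assoc]

/-- Extend a morphism `X ⟶ row₀ ⋙ T` to `Φ(X) ⟶ T`. -/
noncomputable def phiExtendTo (hd : 0 < d) {X : Paths V ⥤ ModuleCat.{0} k}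
    {T : ExtCat V d ⥤ ModuleCat.{0} k} (ψ₀ : X ⟶ rowF V d ⟨0, hd⟩ ⋙ T) :
    (Phi k V d).obj X ⟶ T where
  app c := ψ₀.app (Quotient.as c).v ≫
    T.map (vert0 (Quotient.as c).v (Quotient.as c).r.val (Quotient.as c).r.isLt)
  naturality := by
    rintro ⟨x⟩ ⟨y⟩ ⟨g⟩
    exact extendTo_nat hd ψ₀ x y g

/-- Single-arrow naturality for `phiExtendFrom`. -/
lemma extendFrom_nat1 (hd : 0 < d) {X : Paths V ⥤ ModuleCat.{0} k}
    {T : ExtCat V d ⥤ ModuleCat.{0} k}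
    (φ₀ : rowF V d ⟨d - 1, by omega⟩ ⋙ T ⟶ X)
    (x y : ExtVertex V d) (e : ExtArrow V d x y) :
    T.map ((extQ V d).map (Quiver.Hom.toPath e)) ≫
        (T.map (vfrom y.v y.r.val y.r.isLt) ≫ φ₀.app y.v) =
      (T.map (vfrom x.v x.r.val x.r.isLt) ≫ φ₀.app x.v) ≫
        ((Phi k V d).obj X).map ((extQ V d).map (Quiver.Hom.toPath e)) := by
  cases e with
  | vert j r h =>
    dsimp only
    have hP : ((Phi k V d).obj X).map ((extQ V d).map
        (Quiver.Hom.toPath (ExtArrow.vert j r h))) = 𝟙 (X.obj j) := by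
      rw [show ((Phi k V d).obj X).map ((extQ V d).map
            (Quiver.Hom.toPath (ExtArrow.vert j r h))) =
          X.map ((projFunctor V d).map ((extQ V d).map
            (Quiver.Hom.toPath (ExtArrow.vert j r h)))) from rfl, proj_vertArrow]
      exact CategoryTheory.Functor.map_id _ _
    erw [hP]
    have hci : (T.map (vfrom j r.val r.isLt) ≫ φ₀.app j) ≫ (𝟙 (X.obj j) : X.obj j ⟶ X.obj j) =
        T.map (vfrom j r.val r.isLt) ≫ φ₀.app j := Category.comp_id _
    erw [hci, ← Category.assoc, ← CategoryTheory.Functor.map_comp]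
    refine congrArg (fun z => T.map z ≫ φ₀.app j) ?_
    rw [vfrom_succ j r.val r.isLt h]
  | @horiz j j' a r =>
    dsimp only
    have hP : ((Phi k V d).obj X).map ((extQ V d).map
        (Quiver.Hom.toPath (ExtArrow.horiz a r))) = X.map (Quiver.Hom.toPath a) := by
      rw [show ((Phi k V d).obj X).map ((extQ V d).map
            (Quiver.Hom.toPath (ExtArrow.horiz a r))) =
          X.map ((projFunctor V d).map ((extQ V d).map
            (Quiver.Hom.toPath (ExtArrow.horiz a r)))) from rfl, proj_horiz]
      rfl
    have hnat := φ₀.naturality (Quiver.Hom.toPath a)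
    rw [show (rowF V d ⟨d - 1, by omega⟩ ⋙ T).map (Quiver.Hom.toPath a) =
        T.map ((extQ V d).map (Quiver.Hom.toPath
          (ExtArrow.horiz a ⟨d - 1, by omega⟩))) from
      congrArg T.map (Paths.lift_toPath _ _)] at hnat
    erw [hP, ← Category.assoc, ← CategoryTheory.Functor.map_comp, horiz_vfrom a r.val r.isLt,
      CategoryTheory.Functor.map_comp, Category.assoc, Category.assoc, hnat, ← Category.assoc]

/-- Naturality for `phiExtendFrom`. -/
lemma extendFrom_nat (hd : 0 < d) {X : Paths V ⥤ ModuleCat.{0} k}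
    {T : ExtCat V d ⥤ ModuleCat.{0} k}
    (φ₀ : rowF V d ⟨d - 1, by omega⟩ ⋙ T ⟶ X)
    (x y : ExtVertex V d) (g : Quiver.Path x y) :
    T.map ((extQ V d).map g) ≫
        (T.map (vfrom y.v y.r.val y.r.isLt) ≫ φ₀.app y.v) =
      (T.map (vfrom x.v x.r.val x.r.isLt) ≫ φ₀.app x.v) ≫
        ((Phi k V d).obj X).map ((extQ V d).map g) := by
  induction g with
  | nil =>
    have h1 : ((Phi k V d).obj X).map ((extQ V d).map
        (Quiver.Path.nil : Quiver.Path x x)) = 𝟙 _ := CategoryTheory.Functor.map_id _ _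
    have h2 : T.map ((extQ V d).map (Quiver.Path.nil : Quiver.Path x x)) = 𝟙 _ :=
      CategoryTheory.Functor.map_id _ _
    erw [h1, h2, Category.id_comp]
  | cons p e ih =>
    rw [show (extQ V d).map (p.cons e) =
        (extQ V d).map p ≫ (extQ V d).map (Quiver.Hom.toPath e) from
      (extQ V d).map_comp p (Quiver.Hom.toPath e)]
    erw [CategoryTheory.Functor.map_comp, CategoryTheory.Functor.map_comp,
      Category.assoc, extendFrom_nat1 hd φ₀ _ _ e, ← Category.assoc, ih, Category.assoc]

/-- Extend a morphism `rowTop ⋙ T ⟶ X` to `T ⟶ Φ(X)`. -/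
noncomputable def phiExtendFrom (hd : 0 < d) {X : Paths V ⥤ ModuleCat.{0} k}
    {T : ExtCat V d ⥤ ModuleCat.{0} k}
    (φ₀ : rowF V d ⟨d - 1, by omega⟩ ⋙ T ⟶ X) :
    T ⟶ (Phi k V d).obj X where
  app c := T.map (vfrom (Quotient.as c).v (Quotient.as c).r.val (Quotient.as c).r.isLt) ≫
    φ₀.app (Quotient.as c).v
  naturality := by
    rintro ⟨x⟩ ⟨y⟩ ⟨g⟩
    exact extendFrom_nat hd φ₀ x y g

/-- Restricting `phiExtendFrom` back gives the original morphism. -/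
lemma restrict_phiExtendFrom (hd : 0 < d) {X : Paths V ⥤ ModuleCat.{0} k}
    {T : ExtCat V d ⥤ ModuleCat.{0} k}
    (φ₀ : rowF V d ⟨d - 1, by omega⟩ ⋙ T ⟶ X) :
    restrictFrom ⟨d - 1, by omega⟩ (phiExtendFrom hd φ₀) = φ₀ := by
  apply NatTrans.ext
  funext j
  show T.map (vfrom (V := V) (d := d) j (d - 1) (Nat.sub_lt hd Nat.one_pos)) ≫ φ₀.app j =
    φ₀.app j
  have hv : vfrom (V := V) (d := d) j (d - 1) (Nat.sub_lt hd Nat.one_pos) = 𝟙 _ := by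
    erw [vfrom, dif_neg (by omega)]
    exact eqToHom_refl _ _
  rw [hv]
  calc T.map (𝟙 _) ≫ φ₀.app j = 𝟙 _ ≫ φ₀.app j := by
        rw [CategoryTheory.Functor.map_id]
        rfl
    _ = φ₀.app j := Category.id_comp _

/-- Extending the restriction gives back the original morphism. -/
lemma phiExtendFrom_restrict (hd : 0 < d) {X : Paths V ⥤ ModuleCat.{0} k}
    {T : ExtCat V d ⥤ ModuleCat.{0} k} (ψ : T ⟶ (Phi k V d).obj X) :
    phiExtendFrom hd (restrictFrom ⟨d - 1, by omega⟩ ψ) = ψ := by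
  apply NatTrans.ext
  funext c
  have hnat := ψ.naturality
    (vfrom (Quotient.as c).v (Quotient.as c).r.val (Quotient.as c).r.isLt)
  have hid : ((Phi k V d).obj X).map
      (vfrom (Quotient.as c).v (Quotient.as c).r.val (Quotient.as c).r.isLt) = 𝟙 _ := by
    rw [show ((Phi k V d).obj X).map
          (vfrom (Quotient.as c).v (Quotient.as c).r.val (Quotient.as c).r.isLt) =
        X.map ((projFunctor V d).map
          (vfrom (Quotient.as c).v (Quotient.as c).r.val (Quotient.as c).r.isLt)) from rfl,
      proj_vfrom]
    exact CategoryTheory.Functor.map_id _ _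
  rw [hid] at hnat
  exact hnat.trans (Category.comp_id _)

/-- Extending the restriction gives back the original morphism (projective case). -/
lemma phiExtendTo_restrict (hd : 0 < d) {X : Paths V ⥤ ModuleCat.{0} k}
    {T : ExtCat V d ⥤ ModuleCat.{0} k} (ψ : (Phi k V d).obj X ⟶ T) :
    phiExtendTo hd (restrictTo ⟨0, hd⟩ ψ) = ψ := by
  apply NatTrans.ext
  funext c
  have hnat := ψ.naturality
    (vert0 (Quotient.as c).v (Quotient.as c).r.val (Quotient.as c).r.isLt)
  have hid : ((Phi k V d).obj X).map
      (vert0 (Quotient.as c).v (Quotient.as c).r.val (Quotient.as c).r.isLt) = 𝟙 _ := by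
    rw [show ((Phi k V d).obj X).map
          (vert0 (Quotient.as c).v (Quotient.as c).r.val (Quotient.as c).r.isLt) =
        X.map ((projFunctor V d).map
          (vert0 (Quotient.as c).v (Quotient.as c).r.val (Quotient.as c).r.isLt)) from rfl,
      proj_vert0]
    exact CategoryTheory.Functor.map_id _ _
  rw [hid] at hnat
  exact hnat.symm.trans (Category.id_comp _)

/-- The universal property of `Φ(P)` at the vertex `(i,1)`. -/
noncomputable def projEquiv (hd : 0 < d) (i : V)
    (P : Paths V ⥤ ModuleCat.{0} k)
    (eP : ∀ X : Paths V ⥤ ModuleCat.{0} k, (P ⟶ X) ≃ₗ[k] X.obj ((Paths.of V).obj i))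
    (heP : ∀ (X Y : Paths V ⥤ ModuleCat.{0} k) (g : X ⟶ Y) (ψ : P ⟶ X),
      eP Y (ψ ≫ g) = g.app ((Paths.of V).obj i) (eP X ψ))
    (T : ExtCat V d ⥤ ModuleCat.{0} k) :
    ((Phi k V d).obj P ⟶ T) ≃ T.obj { as := ⟨i, ⟨0, hd⟩⟩ } where
  toFun ψ := ψ.app { as := ⟨i, ⟨0, hd⟩⟩ } (eP P (𝟙 P))
  invFun t := phiExtendTo hd ((eP (rowF V d ⟨0, hd⟩ ⋙ T)).symm t)
  left_inv ψ := by
    have key : (eP (rowF V d ⟨0, hd⟩ ⋙ T)).symm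
        (ψ.app { as := ⟨i, ⟨0, hd⟩⟩ } (eP P (𝟙 P))) = restrictTo ⟨0, hd⟩ ψ := by
      have h1 : eP (rowF V d ⟨0, hd⟩ ⋙ T) (restrictTo ⟨0, hd⟩ ψ) =
          ψ.app { as := ⟨i, ⟨0, hd⟩⟩ } (eP P (𝟙 P)) := by
        have s1 : eP (rowF V d ⟨0, hd⟩ ⋙ T) (restrictTo ⟨0, hd⟩ ψ) =
            eP _ (𝟙 P ≫ restrictTo ⟨0, hd⟩ ψ) := by
          rw [Category.id_comp]
        exact s1.trans (heP _ _ _ _)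
      rw [← h1, LinearEquiv.symm_apply_apply]
    show phiExtendTo hd ((eP (rowF V d ⟨0, hd⟩ ⋙ T)).symm
        (ψ.app { as := ⟨i, ⟨0, hd⟩⟩ } (eP P (𝟙 P)))) = ψ
    rw [key]
    exact phiExtendTo_restrict hd ψ
  right_inv t := by
    have happ : (phiExtendTo hd ((eP (rowF V d ⟨0, hd⟩ ⋙ T)).symm t)).app
        { as := ⟨i, ⟨0, hd⟩⟩ } =
        ((eP (rowF V d ⟨0, hd⟩ ⋙ T)).symm t).app ((Paths.of V).obj i) := by
      show ((eP (rowF V d ⟨0, hd⟩ ⋙ T)).symm t).app ((Paths.of V).obj i) ≫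
          T.map (𝟙 ((extQ V d).obj ⟨i, ⟨0, hd⟩⟩)) = _
      have hm : T.map (𝟙 ((extQ V d).obj ⟨i, ⟨0, hd⟩⟩)) = 𝟙 _ :=
        CategoryTheory.Functor.map_id _ _
      erw [hm]
      exact Category.comp_id _
    show (phiExtendTo hd ((eP (rowF V d ⟨0, hd⟩ ⋙ T)).symm t)).app
        { as := ⟨i, ⟨0, hd⟩⟩ } (eP P (𝟙 P)) = t
    rw [happ]
    exact (heP _ _ _ _).symm.trans (by rw [Category.id_comp]; exact LinearEquiv.apply_symm_apply _ _)

/-- The universal property of `Φ(I)` at the vertex `(i,d)`. -/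
noncomputable def injEquiv (hd : 0 < d) (i : V)
    (I : Paths V ⥤ ModuleCat.{0} k)
    (eI : ∀ X : Paths V ⥤ ModuleCat.{0} k,
      (X ⟶ I) ≃ₗ[k] Module.Dual k (X.obj ((Paths.of V).obj i)))
    (T : ExtCat V d ⥤ ModuleCat.{0} k) :
    (T ⟶ (Phi k V d).obj I) ≃ Module.Dual k (T.obj { as := ⟨i, ⟨d - 1, by omega⟩⟩ }) where
  toFun ψ := eI (rowF V d ⟨d - 1, by omega⟩ ⋙ T) (restrictFrom ⟨d - 1, by omega⟩ ψ)
  invFun f := phiExtendFrom hd ((eI (rowF V d ⟨d - 1, by omega⟩ ⋙ T)).symm f)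
  left_inv ψ := by
    show phiExtendFrom hd ((eI (rowF V d ⟨d - 1, by omega⟩ ⋙ T)).symm
        (eI (rowF V d ⟨d - 1, by omega⟩ ⋙ T) (restrictFrom ⟨d - 1, by omega⟩ ψ))) = ψ
    rw [LinearEquiv.symm_apply_apply]
    exact phiExtendFrom_restrict hd ψ
  right_inv f := by
    show eI (rowF V d ⟨d - 1, by omega⟩ ⋙ T) (restrictFrom ⟨d - 1, by omega⟩
        (phiExtendFrom hd ((eI (rowF V d ⟨d - 1, by omega⟩ ⋙ T)).symm f))) = f
    rw [restrict_phiExtendFrom hd]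
    exact (eI (rowF V d ⟨d - 1, by omega⟩ ⋙ T)).apply_symm_apply f

end Rep

section IsoOfRepr

variable {C : Type*} [Category C]

/-- Two objects representing the same functor are isomorphic. -/
lemma iso_of_repr {A B : C} {F : C → Type*}
    (Fmap : ∀ {X Y : C}, (X ⟶ Y) → F X → F Y)
    (eA : ∀ X : C, (A ⟶ X) ≃ F X)
    (hA : ∀ {X Y : C} (g : X ⟶ Y) (ψ : A ⟶ X), eA Y (ψ ≫ g) = Fmap g (eA X ψ))
    (eB : ∀ X : C, (B ⟶ X) ≃ F X)
    (hB : ∀ {X Y : C} (g : X ⟶ Y) (ψ : B ⟶ X), eB Y (ψ ≫ g) = Fmap g (eB X ψ)) :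
    Nonempty (A ≅ B) := by
  refine ⟨⟨(eA B).symm (eB B (𝟙 B)), (eB A).symm (eA A (𝟙 A)), ?_, ?_⟩⟩
  · apply (eA A).injective
    calc eA A ((eA B).symm (eB B (𝟙 B)) ≫ (eB A).symm (eA A (𝟙 A)))
        = Fmap ((eB A).symm (eA A (𝟙 A))) (eA B ((eA B).symm (eB B (𝟙 B)))) := hA _ _
      _ = Fmap ((eB A).symm (eA A (𝟙 A))) (eB B (𝟙 B)) := by
          rw [Equiv.apply_symm_apply]
      _ = eB A (𝟙 B ≫ (eB A).symm (eA A (𝟙 A))) := (hB _ _).symm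
      _ = eB A ((eB A).symm (eA A (𝟙 A))) := by rw [Category.id_comp]
      _ = eA A (𝟙 A) := Equiv.apply_symm_apply _ _
  · apply (eB B).injective
    calc eB B ((eB A).symm (eA A (𝟙 A)) ≫ (eA B).symm (eB B (𝟙 B)))
        = Fmap ((eA B).symm (eB B (𝟙 B))) (eB A ((eB A).symm (eA A (𝟙 A)))) := hB _ _
      _ = Fmap ((eA B).symm (eB B (𝟙 B))) (eA A (𝟙 A)) := by
          rw [Equiv.apply_symm_apply]
      _ = eA B (𝟙 A ≫ (eA B).symm (eB B (𝟙 B))) := (hA _ _).symm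
      _ = eA B ((eA B).symm (eB B (𝟙 B))) := by rw [Category.id_comp]
      _ = eB B (𝟙 B) := Equiv.apply_symm_apply _ _

/-- Two objects corepresenting the same functor are isomorphic. -/
lemma iso_of_corepr {A B : C} {F : C → Type*}
    (Fmap : ∀ {X Y : C}, (X ⟶ Y) → F Y → F X)
    (eA : ∀ X : C, (X ⟶ A) ≃ F X)
    (hA : ∀ {X Y : C} (g : X ⟶ Y) (ψ : Y ⟶ A), eA X (g ≫ ψ) = Fmap g (eA Y ψ))
    (eB : ∀ X : C, (X ⟶ B) ≃ F X)
    (hB : ∀ {X Y : C} (g : X ⟶ Y) (ψ : Y ⟶ B), eB X (g ≫ ψ) = Fmap g (eB Y ψ)) :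
    Nonempty (A ≅ B) := by
  refine ⟨⟨(eB A).symm (eA A (𝟙 A)), (eA B).symm (eB B (𝟙 B)), ?_, ?_⟩⟩
  · apply (eA A).injective
    calc eA A ((eB A).symm (eA A (𝟙 A)) ≫ (eA B).symm (eB B (𝟙 B)))
        = Fmap ((eB A).symm (eA A (𝟙 A))) (eA B ((eA B).symm (eB B (𝟙 B)))) := hA _ _
      _ = Fmap ((eB A).symm (eA A (𝟙 A))) (eB B (𝟙 B)) := by
          rw [Equiv.apply_symm_apply]
      _ = eB A ((eB A).symm (eA A (𝟙 A)) ≫ 𝟙 B) := (hB _ _).symm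
      _ = eB A ((eB A).symm (eA A (𝟙 A))) := by rw [Category.comp_id]
      _ = eA A (𝟙 A) := Equiv.apply_symm_apply _ _
  · apply (eB B).injective
    calc eB B ((eA B).symm (eB B (𝟙 B)) ≫ (eB A).symm (eA A (𝟙 A)))
        = Fmap ((eA B).symm (eB B (𝟙 B))) (eB A ((eB A).symm (eA A (𝟙 A)))) := hB _ _
      _ = Fmap ((eA B).symm (eB B (𝟙 B))) (eA A (𝟙 A)) := by
          rw [Equiv.apply_symm_apply]
      _ = eA B ((eA B).symm (eB B (𝟙 B)) ≫ 𝟙 A) := (hA _ _).symm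
      _ = eA B ((eA B).symm (eB B (𝟙 B))) := by rw [Category.comp_id]
      _ = eB B (𝟙 B) := Equiv.apply_symm_apply _ _

end IsoOfRepr

theorem Phi_projective_injective_objects
    (k : Type) [Field k] (V : Type) [Quiver.{0} V] [Fintype V]
    (d : ℕ) (hd : 1 ≤ d) (i : V)
    -- P is the indecomposable projective of rep(Q) at vertex i : Hom(P, X) ≅ X_i
    (P : Paths V ⥤ ModuleCat.{0} k)
    (eP : ∀ X : Paths V ⥤ ModuleCat.{0} k, (P ⟶ X) ≃ₗ[k] X.obj ((Paths.of V).obj i))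
    (heP : ∀ (X Y : Paths V ⥤ ModuleCat.{0} k) (g : X ⟶ Y) (ψ : P ⟶ X),
      eP Y (ψ ≫ g) = g.app ((Paths.of V).obj i) (eP X ψ))
    -- P' is the indecomposable projective of Mod(R_d) at vertex (i,1)
    (P' : ExtCat V d ⥤ ModuleCat.{0} k)
    (eP' : ∀ T : ExtCat V d ⥤ ModuleCat.{0} k,
      (P' ⟶ T) ≃ₗ[k] T.obj { as := ⟨i, ⟨0, hd⟩⟩ })
    (heP' : ∀ (T T' : ExtCat V d ⥤ ModuleCat.{0} k) (g : T ⟶ T') (ψ : P' ⟶ T),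
      eP' T' (ψ ≫ g) = g.app { as := ⟨i, ⟨0, hd⟩⟩ } (eP' T ψ))
    -- I is the indecomposable injective of rep(Q) at vertex i : Hom(X, I) ≅ (X_i)^*
    (I : Paths V ⥤ ModuleCat.{0} k)
    (eI : ∀ X : Paths V ⥤ ModuleCat.{0} k,
      (X ⟶ I) ≃ₗ[k] Module.Dual k (X.obj ((Paths.of V).obj i)))
    (heI : ∀ (X Y : Paths V ⥤ ModuleCat.{0} k) (g : X ⟶ Y) (ψ : Y ⟶ I),
      eI X (g ≫ ψ) = (eI Y ψ).comp (g.app ((Paths.of V).obj i)).hom)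
    -- I' is the indecomposable injective of Mod(R_d) at vertex (i,d)
    (I' : ExtCat V d ⥤ ModuleCat.{0} k)
    (eI' : ∀ T : ExtCat V d ⥤ ModuleCat.{0} k,
      (T ⟶ I') ≃ₗ[k] Module.Dual k (T.obj { as := ⟨i, ⟨d - 1, by omega⟩⟩ }))
    (heI' : ∀ (T T' : ExtCat V d ⥤ ModuleCat.{0} k) (g : T ⟶ T') (ψ : T' ⟶ I'),
      eI' T (g ≫ ψ) = (eI' T' ψ).comp (g.app { as := ⟨i, ⟨d - 1, by omega⟩⟩ }).hom) :
    Nonempty ((Phi k V d).obj P ≅ P') ∧ Nonempty ((Phi k V d).obj I ≅ I') := by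
  constructor
  · exact iso_of_repr
      (F := fun T => (T.obj { as := ⟨i, ⟨0, hd⟩⟩ } : Type))
      (Fmap := fun {T T'} (g : T ⟶ T') (t : T.obj { as := ⟨i, ⟨0, hd⟩⟩ }) =>
        g.app { as := ⟨i, ⟨0, hd⟩⟩ } t)
      (projEquiv hd i P eP heP)
      (fun {T T'} g ψ => rfl)
      (fun T => (eP' T).toEquiv)
      (fun {T T'} g ψ => heP' T T' g ψ)
  · have hAinj : ∀ {T T' : ExtCat V d ⥤ ModuleCat.{0} k} (g : T ⟶ T')
        (ψ : T' ⟶ (Phi k V d).obj I),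
        injEquiv hd i I eI T (g ≫ ψ) =
          (injEquiv hd i I eI T' ψ).comp (g.app { as := ⟨i, ⟨d - 1, by omega⟩⟩ }).hom := by
      intro T T' g ψ
      show eI (rowF V d ⟨d - 1, by omega⟩ ⋙ T)
        (restrictFrom ⟨d - 1, by omega⟩ (g ≫ ψ)) = _
      have hres : restrictFrom (k := k) ⟨d - 1, by omega⟩ (g ≫ ψ) =
          Functor.whiskerLeft (rowF V d ⟨d - 1, by omega⟩) g ≫ restrictFrom ⟨d - 1, by omega⟩ ψ := by
        apply NatTrans.ext
        funext j
        rfl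
      rw [hres, heI]
      rfl
    exact iso_of_corepr
      (F := fun T => Module.Dual k (T.obj { as := ⟨i, ⟨d - 1, by omega⟩⟩ }))
      (Fmap := fun {T T'} (g : T ⟶ T')
        (f : Module.Dual k (T'.obj { as := ⟨i, ⟨d - 1, by omega⟩⟩ })) =>
        f.comp (g.app { as := ⟨i, ⟨d - 1, by omega⟩⟩ }).hom)
      (injEquiv hd i I eI)
      (fun {T T'} g ψ => hAinj g ψ)
      (fun T => (eI' T).toEquiv)
      (fun {T T'} g ψ => heI' T T' g ψ)
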